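/- Assume (A1)-(A4), (B1), (B2), (B3) and (B4). Then the mountain pass value over the constraint M equals the infimum of J over the Nehari–Pankov set: c_M = c_N, where c_M := inf_{γ ∈ Γ} sup_{t ∈ [0,1]} J(γ(t)) with Γ := {γ ∈ C([0,1], M) : γ(0) = 0, ‖γ(1)⁺‖ > r, J(γ(1)) < 0}, and c_N := inf_N J. -/

import Mathlib

open Filter Topology

noncomputable section

variable {H W : Type*} [NormedAddCommGroup H] [InnerProductSpace ℝ H] [CompleteSpace H]
  [NormedAddCommGroup W] [NormedSpace ℝ W] [CompleteSpace W]

/-- `uₙ` T-converges to `l`: `uₙ⁺ → l⁺` in the norm of `H` and `ũₙ ⇀ l̃` weakly in `W`. -/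
def TConv (u : ℕ → H × W) (l : H × W) : Prop :=
  Tendsto (fun n => (u n).1) atTop (𝓝 l.1) ∧
    ∀ φ : W →L[ℝ] ℝ, Tendsto (fun n => φ (u n).2) atTop (𝓝 (φ l.2))

/-- The Nehari–Pankov set
`N = {u ≠ 0 : J(u) > 0 and J'(u)[w] = 0 for all w ∈ ℝu + X̃}`. -/
def NehariPankov (J : H × W → ℝ) : Set (H × W) :=
  {u | u ≠ 0 ∧ 0 < J u ∧ ∀ (s : ℝ) (v : W), fderiv ℝ J u (s • u + ((0 : H), v)) = 0}

/-- The natural constraint `M = {u : I'(u)[v] = 0 for all v ∈ X̃}`. -/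
def NatConstraint (I : H × W → ℝ) : Set (H × W) :=
  {u | ∀ v : W, fderiv ℝ I u ((0 : H), v) = 0}

/-!
On the constraint `M` the `W`-component is slaved to the `H`-component. By (A1), (A2), (B1) and
reflexivity of `W`, the functional `I` attains its minimum on every fibre `{x} × W`; by (B4) the
minimiser `fibreMin I x` is the only point of `M` over `x`, and by (A3) it depends continuously on
`x`. So paths in `M` are paths in `H` lifted by `fibreMin I`.

By (B3) each `u ∈ N` is the strict maximum of `J` on `ℝ₊u + X̃`. Since `J ∘ fibreMin I` exceeds `a`
on the sphere of radius `r` and tends to `-∞` along rays (B2), every ray `ℝ₊x`, `x ≠ 0`, contains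
exactly one point `s(x) • x` with `fibreMin I (s(x) • x) ∈ N`; the scale `s` is continuous and
`1 / s(x) ≤ ‖x‖ / √(2a)` tends to `0` as `x → 0`.

Hence `c_M ≤ c_N`, since for `u ∈ N` the lifted ray `t ↦ fibreMin I (t T u⁺)` is an admissible
path along which `J ≤ J u`; and `c_N ≤ c_M`, since along an admissible path `γ` the function
`1 / s(γ(t)⁺)` runs continuously from `0` to a value `≥ 1`, so `γ` meets `N`.
-/

open NormedSpace

theorem tendsto_of_le_liminf_of_le_of_tendsto {f g : ℕ → ℝ} {L : ℝ}
    (hf : IsBoundedUnder (· ≥ ·) atTop f) (hL : L ≤ liminf f atTop) (hfg : ∀ n, f n ≤ g n)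
    (hg : Tendsto g atTop (𝓝 L)) : Tendsto f atTop (𝓝 L) :=
  tendsto_order.2 ⟨fun _ hb => eventually_lt_of_lt_liminf (hb.trans_le hL) hf,
    fun _ hb => (hg.eventually_lt_const hb).mono fun n hn => (hfg n).trans_lt hn⟩

theorem Real.sInf_le_of_sInf_pos {S : Set ℝ} (hS : 0 < sInf S) {x : ℝ} (hx : x ∈ S) :
    sInf S ≤ x := by
  by_cases hbdd : BddBelow S
  · exact csInf_le hbdd hx
  · rw [Real.sInf_of_not_bddBelow hbdd] at hS
    exact absurd hS (lt_irrefl 0)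

theorem exists_pos_isMaxOn_Ici {φ : ℝ → ℝ} (hφ : Continuous φ) (h0 : φ 0 ≤ 0) {s₁ : ℝ}
    (hs₁ : 0 ≤ s₁) (hpos : 0 < φ s₁) (htop : Tendsto φ atTop atBot) :
    ∃ s₀ : ℝ, 0 < s₀ ∧ IsMaxOn φ (Set.Ici 0) s₀ := by
  have hc : ∀ᶠ s in cocompact ℝ ⊓ 𝓟 (Set.Ici 0), φ s ≤ φ s₁ := by
    rw [cocompact_eq_atBot_atTop, eventually_inf_principal, eventually_sup]
    exact ⟨(eventually_lt_atBot 0).mono fun s hs h0 => absurd h0 (not_le.2 hs),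
      (htop.eventually_le_atBot _).mono fun s hs _ => hs⟩
  obtain ⟨s₀, hs₀, hmax⟩ := hφ.continuousOn.exists_isMaxOn' isClosed_Ici hs₁ hc
  refine ⟨s₀, lt_of_le_of_ne hs₀ ?_, hmax⟩
  rintro rfl
  linarith [isMaxOn_iff.1 hmax s₁ hs₁]

section WeakCompactness

open TopologicalSpace

variable {E : Type*} [NormedAddCommGroup E] [NormedSpace ℝ E]

theorem Submodule.exists_strongDual_eq_zero_of_notMem (Y : Submodule ℝ E)
    [IsClosed (Y : Set E)] {x : E} (hx : x ∉ Y) :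
    ∃ φ : StrongDual ℝ E, (∀ z ∈ Y, φ z = 0) ∧ φ x ≠ 0 := by
  obtain ⟨f, hf⟩ := SeparatingDual.exists_ne_zero (R := ℝ)
    (x := Y.mkQ x) (by simpa [Submodule.Quotient.mk_eq_zero] using hx)
  exact ⟨f.comp Y.mkQL, fun z hz => by simp [(Submodule.Quotient.mk_eq_zero Y).2 hz], hf⟩

theorem Submodule.surjective_inclusionInDoubleDual
    (hrefl : Function.Surjective (inclusionInDoubleDual ℝ E)) (Y : Submodule ℝ E)
    [IsClosed (Y : Set E)] :
    Function.Surjective (inclusionInDoubleDual ℝ Y) := by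
  intro F
  let res : StrongDual ℝ E →L[ℝ] StrongDual ℝ Y :=
    (ContinuousLinearMap.compL ℝ Y E ℝ).flip Y.subtypeL
  obtain ⟨x, hx⟩ := hrefl (F.comp res)
  have hxF : ∀ φ : StrongDual ℝ E, φ x = F (res φ) := fun φ => by
    rw [← dual_def, hx]; rfl
  have hxY : x ∈ Y := by
    by_contra hxY
    obtain ⟨φ, hφY, hφx⟩ := Y.exists_strongDual_eq_zero_of_notMem hxY
    have : res φ = 0 := by ext z; exact hφY z z.2
    exact hφx (by rw [hxF, this, map_zero])
  refine ⟨⟨x, hxY⟩, ContinuousLinearMap.ext fun ψ => ?_⟩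
  obtain ⟨g, hg, -⟩ := exists_extension_norm_eq Y ψ
  have : res g = ψ := by ext z; exact hg z
  rw [dual_def, ← this, ← hxF]
  rfl

theorem separableSpace_of_separableSpace_strongDual
    [SeparableSpace (StrongDual ℝ E)] : SeparableSpace E := by
  obtain ⟨D, hDc, hDd⟩ := exists_countable_dense (StrongDual ℝ E)
  have hx : ∀ f : StrongDual ℝ E, ∃ x : E, ‖x‖ ≤ 1 ∧ ‖f‖ / 2 ≤ ‖f x‖ := by
    intro f
    rcases eq_or_ne f 0 with rfl | hf
    · exact ⟨0, by simp, by simp⟩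
    obtain ⟨x, hx1, hx2⟩ := f.exists_lt_apply_of_lt_opNorm (r := ‖f‖ / 2) (by
      have := norm_pos_iff.2 hf; linarith)
    exact ⟨x, hx1.le, hx2.le⟩
  choose x hx1 hx2 using hx
  set S := (Submodule.span ℝ (x '' D)).topologicalClosure
  suffices hS : S = ⊤ by
    have : IsSeparable (S : Set E) :=
      ((hDc.image x).isSeparable.span (R := ℝ)).closure
    rw [hS, Submodule.top_coe] at this
    exact isSeparable_univ_iff.1 this
  by_contra hS
  obtain ⟨y, hy⟩ : ∃ y, y ∉ S := by
    by_contra! h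
    exact hS (Submodule.eq_top_iff'.2 h)
  have : IsClosed (S : Set E) := Submodule.isClosed_topologicalClosure _
  obtain ⟨ψ, hψS, hψy⟩ := S.exists_strongDual_eq_zero_of_notMem hy
  have hψ : 0 < ‖ψ‖ := norm_pos_iff.2 fun h => hψy (by simp [h])
  obtain ⟨f, hfD, hfψ⟩ := Metric.mem_closure_iff.1 (hDd ψ) (‖ψ‖ / 4) (by positivity)
  rw [dist_eq_norm'] at hfψ
  have hfx : f (x f) = (f - ψ) (x f) := by
    simp [hψS _ (Submodule.le_topologicalClosure _ (Submodule.subset_span ⟨f, hfD, rfl⟩))]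
  have h1 : ‖f (x f)‖ ≤ ‖f - ψ‖ := calc
    ‖f (x f)‖ = ‖(f - ψ) (x f)‖ := by rw [hfx]
    _ ≤ ‖f - ψ‖ * ‖x f‖ := (f - ψ).le_opNorm _
    _ ≤ ‖f - ψ‖ := mul_le_of_le_one_right (norm_nonneg _) (hx1 f)
  have h2 : ‖ψ‖ ≤ ‖f‖ + ‖f - ψ‖ := by
    simpa using norm_sub_le f (f - ψ)
  linarith [hx2 f]

theorem exists_subseq_weakly_tendsto_of_separableSpace [SeparableSpace E]
    (hrefl : Function.Surjective (inclusionInDoubleDual ℝ E)) {y : ℕ → E} {C : ℝ}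
    (hC : ∀ n, ‖y n‖ ≤ C) :
    ∃ x : E, ∃ ψ : ℕ → ℕ, StrictMono ψ ∧
      ∀ φ : StrongDual ℝ E, Tendsto (fun n => φ (y (ψ n))) atTop (𝓝 (φ x)) := by
  -- sequential Banach–Alaoglu in `E** = (E*)*` needs `E*` to be separable
  have : SeparableSpace (StrongDual ℝ (StrongDual ℝ E)) :=
    isSeparable_univ_iff.1 <| hrefl.range_eq ▸
      isSeparable_range (inclusionInDoubleDual ℝ E).continuous
  have : SeparableSpace (StrongDual ℝ E) :=
    separableSpace_of_separableSpace_strongDual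
  let z : ℕ → WeakDual ℝ (StrongDual ℝ E) := fun n =>
    StrongDual.toWeakDual (inclusionInDoubleDual ℝ E (y n))
  have hz : ∀ n, z n ∈ WeakDual.toStrongDual ⁻¹' Metric.closedBall 0 C := fun n =>
    (mem_closedBall_zero_iff (E := StrongDual ℝ (StrongDual ℝ E))).2
      ((double_dual_bound ℝ E _).trans (hC n))
  obtain ⟨F, -, ψ, hψ, hzF⟩ := WeakDual.isSeqCompact_closedBall ℝ (StrongDual ℝ E) 0 C hz
  obtain ⟨x, hx⟩ := hrefl (WeakDual.toStrongDual F)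
  refine ⟨x, ψ, hψ, fun φ => ?_⟩
  have hφx : F φ = φ x := by rw [← dual_def, hx]; rfl
  exact hφx ▸ ((WeakDual.eval_continuous φ).tendsto F).comp hzF

theorem exists_subseq_weakly_tendsto
    (hrefl : Function.Surjective (inclusionInDoubleDual ℝ E)) {y : ℕ → E}
    (hy : BddAbove (Set.range fun n => ‖y n‖)) :
    ∃ x : E, ∃ ψ : ℕ → ℕ, StrictMono ψ ∧
      ∀ φ : StrongDual ℝ E, Tendsto (fun n => φ (y (ψ n))) atTop (𝓝 (φ x)) := by
  obtain ⟨C, hC⟩ := hy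
  set Y := (Submodule.span ℝ (Set.range y)).topologicalClosure
  have : IsClosed (Y : Set E) := Submodule.isClosed_topologicalClosure _
  have : SeparableSpace Y :=
    (((Set.countable_range y).isSeparable.span (R := ℝ)).closure).separableSpace
  have hyY : ∀ n, y n ∈ Y := fun n =>
    Submodule.le_topologicalClosure _ (Submodule.subset_span (Set.mem_range_self n))
  obtain ⟨x, ψ, hψ, hx⟩ := exists_subseq_weakly_tendsto_of_separableSpace
    (Y.surjective_inclusionInDoubleDual hrefl) (y := fun n => ⟨y n, hyY n⟩)
    (fun n => hC (Set.mem_range_self n))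
  exact ⟨x, ψ, hψ, fun φ => hx (φ.comp Y.subtypeL)⟩

end WeakCompactness

section FibreMinimisation

section

variable {E F : Type*}

def HasFibreMinima (I : E × F → ℝ) : Prop :=
  ∀ x : E, ∃ y : F, ∀ y' : F, I (x, y) ≤ I (x, y')

theorem J_le_half_norm_sq [Norm E] {I J : E × F → ℝ}
    (hJ : ∀ u : E × F, J u = 1 / 2 * ‖u.1‖ ^ 2 - I u) (hA1 : ∀ u : E × F, 0 ≤ I u) (u : E × F) :
    J u ≤ 1 / 2 * ‖u.1‖ ^ 2 := by
  linarith [hJ u, hA1 u]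

variable [Nonempty F] {I J : E × F → ℝ}

def fibreMin (I : E × F → ℝ) (x : E) : E × F :=
  (x, Classical.epsilon fun y : F => ∀ y' : F, I (x, y) ≤ I (x, y'))

@[simp]
theorem fibreMin_fst (x : E) : (fibreMin I x).1 = x := rfl

theorem fibreMin_le (hmin : HasFibreMinima I) (x : E) (y : F) : I (fibreMin I x) ≤ I (x, y) :=
  Classical.epsilon_spec (hmin x) y

theorem J_le_J_fibreMin [Norm E] (hJ : ∀ u : E × F, J u = 1 / 2 * ‖u.1‖ ^ 2 - I u)
    (hmin : HasFibreMinima I) (x : E) (y : F) : J (x, y) ≤ J (fibreMin I x) := by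
  rw [hJ, hJ, fibreMin_fst]
  linarith [fibreMin_le hmin x y]

theorem J_fibreMin_zero_nonpos [NormedAddCommGroup E]
    (hJ : ∀ u : E × F, J u = 1 / 2 * ‖u.1‖ ^ 2 - I u) (hA1 : ∀ u : E × F, 0 ≤ I u) :
    J (fibreMin I (0 : E)) ≤ 0 := by
  simpa using J_le_half_norm_sq hJ hA1 (fibreMin I 0)

end

variable {E F : Type*} [NormedAddCommGroup E] [NormedAddCommGroup F] {I J : E × F → ℝ}

theorem bddAbove_range_norm_snd
    (hB1 : ∀ u : ℕ → E × F, Tendsto (fun n => ‖u n‖) atTop atTop →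
      Tendsto (fun n => ‖(u n).1‖ + I (u n)) atTop atTop)
    {u : ℕ → E × F} (hfst : BddAbove (Set.range fun n => ‖(u n).1‖))
    (hI : BddAbove (Set.range fun n => I (u n))) :
    BddAbove (Set.range fun n => ‖(u n).2‖) := by
  by_contra hun
  have : ∀ m : ℕ, ∃ n, (m : ℝ) < ‖(u n).2‖ := fun m => by
    obtain ⟨_, ⟨n, rfl⟩, hn⟩ := not_bddAbove_iff.1 hun m
    exact ⟨n, hn⟩
  choose k hk using this
  have hk' : Tendsto (fun m => ‖u (k m)‖) atTop atTop :=
    tendsto_atTop_mono (fun m => (hk m).le.trans (norm_snd_le _)) tendsto_natCast_atTop_atTop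
  obtain ⟨C₁, hC₁⟩ := hfst
  obtain ⟨C₂, hC₂⟩ := hI
  obtain ⟨m, hm⟩ := ((hB1 _ hk').eventually_gt_atTop (C₁ + C₂)).exists
  exact hm.not_ge (add_le_add (hC₁ ⟨_, rfl⟩) (hC₂ ⟨_, rfl⟩))

theorem continuous_J (hJ : ∀ u : E × F, J u = 1 / 2 * ‖u.1‖ ^ 2 - I u) (hI : Continuous I) :
    Continuous J := by
  rw [funext hJ]
  fun_prop

variable [NormedSpace ℝ F]

theorem exists_subseq_tConv (hrefl : Function.Surjective (inclusionInDoubleDual ℝ F))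
    (hB1 : ∀ u : ℕ → E × F, Tendsto (fun n => ‖u n‖) atTop atTop →
      Tendsto (fun n => ‖(u n).1‖ + I (u n)) atTop atTop)
    {u : ℕ → E × F} {l : E} (hu : Tendsto (fun n => (u n).1) atTop (𝓝 l))
    (hI : BddAbove (Set.range fun n => I (u n))) :
    ∃ y : F, ∃ ψ : ℕ → ℕ, StrictMono ψ ∧ TConv (u ∘ ψ) (l, y) := by
  obtain ⟨y, ψ, hψ, hy⟩ :=
    exists_subseq_weakly_tendsto hrefl (bddAbove_range_norm_snd hB1 hu.norm.bddAbove_range hI)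
  exact ⟨y, ψ, hψ, hu.comp hψ.tendsto_atTop, hy⟩

theorem hasFibreMinima (hrefl : Function.Surjective (inclusionInDoubleDual ℝ F))
    (hA1 : ∀ u : E × F, 0 ≤ I u)
    (hA2 : ∀ (u : ℕ → E × F) (l : E × F), TConv u l →
      I l ≤ Filter.liminf (fun n => I (u n)) atTop)
    (hB1 : ∀ u : ℕ → E × F, Tendsto (fun n => ‖u n‖) atTop atTop →
      Tendsto (fun n => ‖(u n).1‖ + I (u n)) atTop atTop) :
    HasFibreMinima I := by
  intro x
  have hbdd : BddBelow (Set.range fun y : F => I (x, y)) :=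
    ⟨0, by rintro _ ⟨y, rfl⟩; exact hA1 _⟩
  obtain ⟨b, -, hb, hbmem⟩ := exists_seq_tendsto_sInf (Set.range_nonempty _) hbdd
  choose v hv using hbmem
  replace hb : Tendsto (fun n => I (x, v n)) atTop
      (𝓝 (sInf (Set.range fun y : F => I (x, y)))) := by
    simpa only [hv] using hb
  obtain ⟨y, ψ, hψ, hT⟩ := exists_subseq_tConv hrefl hB1 (u := fun n => (x, v n))
    tendsto_const_nhds hb.bddAbove_range
  refine ⟨y, fun y' => ?_⟩
  calc I (x, y) ≤ liminf (fun n => I (x, v (ψ n))) atTop := hA2 _ _ hT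
    _ = sInf (Set.range fun y : F => I (x, y)) := (hb.comp hψ.tendsto_atTop).liminf_eq
    _ ≤ I (x, y') := csInf_le hbdd ⟨y', rfl⟩

end FibreMinimisation

section NaturalConstraint

variable {E F : Type*} [NormedAddCommGroup E] [InnerProductSpace ℝ E] [NormedAddCommGroup F]
  [NormedSpace ℝ F] {I J : E × F → ℝ}

theorem mem_natConstraint_of_forall_le {u : E × F} (hI : DifferentiableAt ℝ I u)
    (hu : ∀ y, I u ≤ I (u.1, y)) : u ∈ NatConstraint I := by
  intro v
  have hd : HasFDerivAt (fun y : F => I (u + ContinuousLinearMap.inr ℝ E F y))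
      ((fderiv ℝ I u).comp (ContinuousLinearMap.inr ℝ E F)) 0 := by
    refine HasFDerivAt.comp (0 : F) ?_ ((ContinuousLinearMap.inr ℝ E F).hasFDerivAt.const_add u)
    rw [map_zero, add_zero]
    exact hI.hasFDerivAt
  have hmin : IsLocalMin (fun y : F => I (u + ContinuousLinearMap.inr ℝ E F y)) 0 :=
    Filter.Eventually.of_forall fun y => by
      have hy : u + ContinuousLinearMap.inr ℝ E F y = (u.1, u.2 + y) := Prod.ext (by simp) (by simp)
      dsimp only
      rw [hy, map_zero, add_zero]
      exact hu _
  simpa using DFunLike.congr_fun (hmin.hasFDerivAt_eq_zero hd) v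

theorem eq_fibreMin_of_mem_natConstraint (hmin : HasFibreMinima I)
    (hB4 : ∀ u ∈ NatConstraint I, ∀ v : F, v ≠ 0 → I u < I (u + ((0 : E), v)))
    {u : E × F} (hu : u ∈ NatConstraint I) : u = fibreMin I u.1 := by
  by_contra hne
  have hv : (fibreMin I u.1).2 - u.2 ≠ 0 := sub_ne_zero.2 fun h => hne (Prod.ext rfl h.symm)
  have := hB4 u hu _ hv
  rw [show u + ((0 : E), (fibreMin I u.1).2 - u.2) = fibreMin I u.1 by ext <;> simp] at this
  exact this.not_ge (fibreMin_le hmin u.1 u.2)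

theorem fibreMin_mem_natConstraint (hI : Differentiable ℝ I) (hmin : HasFibreMinima I) (x : E) :
    fibreMin I x ∈ NatConstraint I :=
  mem_natConstraint_of_forall_le (hI _) (fibreMin_le hmin x)

theorem fibreMin_zero (hI : Differentiable ℝ I) (hmin : HasFibreMinima I)
    (hB4 : ∀ u ∈ NatConstraint I, ∀ v : F, v ≠ 0 → I u < I (u + ((0 : E), v)))
    (hA1 : ∀ u : E × F, 0 ≤ I u) (hI0 : I 0 = 0) : fibreMin I 0 = 0 :=
  (eq_fibreMin_of_mem_natConstraint hmin hB4
    (mem_natConstraint_of_forall_le (hI 0) fun _ => hI0 ▸ hA1 _)).symm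

theorem continuous_fibreMin (hrefl : Function.Surjective (inclusionInDoubleDual ℝ F))
    (hI : Differentiable ℝ I) (hA1 : ∀ u : E × F, 0 ≤ I u)
    (hA2 : ∀ (u : ℕ → E × F) (l : E × F), TConv u l →
      I l ≤ Filter.liminf (fun n => I (u n)) atTop)
    (hA3 : ∀ (u : ℕ → E × F) (l : E × F), TConv u l →
      Tendsto (fun n => I (u n)) atTop (𝓝 (I l)) → Tendsto u atTop (𝓝 l))
    (hB1 : ∀ u : ℕ → E × F, Tendsto (fun n => ‖u n‖) atTop atTop →
      Tendsto (fun n => ‖(u n).1‖ + I (u n)) atTop atTop)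
    (hB4 : ∀ u ∈ NatConstraint I, ∀ v : F, v ≠ 0 → I u < I (u + ((0 : E), v)))
    (hmin : HasFibreMinima I) : Continuous (fibreMin I) := by
  refine continuous_iff_seqContinuous.2 fun x l hx => tendsto_of_subseq_tendsto fun ns hns => ?_
  set u := fun n => fibreMin I (x (ns n))
  have hxl : Tendsto (fun n => x (ns n)) atTop (𝓝 l) := hx.comp hns
  have hup : Tendsto (fun n => I (x (ns n), (fibreMin I l).2)) atTop (𝓝 (I (fibreMin I l))) :=
    (hI.continuous.tendsto _).comp (hxl.prodMk_nhds tendsto_const_nhds)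
  have hle : ∀ n, I (u n) ≤ I (x (ns n), (fibreMin I l).2) := fun n => fibreMin_le hmin _ _
  have hbdd : BddAbove (Set.range fun n => I (u n)) := by
    obtain ⟨C, hC⟩ := hup.bddAbove_range
    exact ⟨C, by rintro _ ⟨n, rfl⟩; exact (hle n).trans (hC ⟨n, rfl⟩)⟩
  obtain ⟨y, ψ, hψ, hT⟩ := exists_subseq_tConv hrefl hB1 hxl hbdd
  have hlow : I (fibreMin I l) ≤ liminf (fun n => I (u (ψ n))) atTop :=
    (fibreMin_le hmin l y).trans (hA2 _ _ hT)
  have hIu : Tendsto (fun n => I (u (ψ n))) atTop (𝓝 (I (fibreMin I l))) :=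
    tendsto_of_le_liminf_of_le_of_tendsto (isBoundedUnder_of ⟨0, fun n => hA1 _⟩) hlow
      (fun n => hle (ψ n)) (hup.comp hψ.tendsto_atTop)
  have hy : ((l, y) : E × F) = fibreMin I l := by
    refine eq_fibreMin_of_mem_natConstraint hmin hB4 (mem_natConstraint_of_forall_le (hI _) ?_)
    intro y'
    calc I (l, y) ≤ liminf (fun n => I (u (ψ n))) atTop := hA2 _ _ hT
      _ = I (fibreMin I l) := hIu.liminf_eq
      _ ≤ I (l, y') := fibreMin_le hmin l y'
  rw [hy] at hT
  exact ⟨ψ, hA3 _ _ hT hIu⟩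

theorem hasFDerivAt_J (hJ : ∀ u : E × F, J u = 1 / 2 * ‖u.1‖ ^ 2 - I u)
    (hI : Differentiable ℝ I) (u : E × F) :
    HasFDerivAt J ((innerSL ℝ u.1).comp (ContinuousLinearMap.fst ℝ E F) - fderiv ℝ I u) u := by
  have h := ((hasFDerivAt_fst (p := u)).norm_sq.const_mul (1 / 2 : ℝ)).sub (hI u).hasFDerivAt
  have hhalf : (1 / 2 : ℝ) • (2 • (innerSL ℝ u.1).comp (ContinuousLinearMap.fst ℝ E F)) =
      (innerSL ℝ u.1).comp (ContinuousLinearMap.fst ℝ E F) := by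
    ext x <;> simp [two_smul]; ring
  rw [hhalf] at h
  exact h.congr_of_eventuallyEq (Filter.Eventually.of_forall hJ)

theorem fderiv_J_apply (hJ : ∀ u : E × F, J u = 1 / 2 * ‖u.1‖ ^ 2 - I u)
    (hI : Differentiable ℝ I) (u x : E × F) :
    fderiv ℝ J u x = inner ℝ u.1 x.1 - fderiv ℝ I u x := by
  simp [(hasFDerivAt_J hJ hI u).fderiv]

end NaturalConstraint

namespace NehariPankov

variable {E F : Type*} [NormedAddCommGroup E] [InnerProductSpace ℝ E] [NormedAddCommGroup F]
  [NormedSpace ℝ F] {I J : E × F → ℝ} {u : E × F}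

theorem fst_ne_zero (hJ : ∀ u : E × F, J u = 1 / 2 * ‖u.1‖ ^ 2 - I u)
    (hA1 : ∀ u : E × F, 0 ≤ I u) (hu : u ∈ NehariPankov J) : u.1 ≠ 0 := by
  intro h0
  have := J_le_half_norm_sq hJ hA1 u
  rw [h0, norm_zero] at this
  linarith [hu.2.1]

theorem mem_natConstraint (hJ : ∀ u : E × F, J u = 1 / 2 * ‖u.1‖ ^ 2 - I u)
    (hI : Differentiable ℝ I) (hu : u ∈ NehariPankov J) : u ∈ NatConstraint I := by
  intro v
  simpa [fderiv_J_apply hJ hI] using hu.2.2 0 v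

theorem fderiv_apply_self (hJ : ∀ u : E × F, J u = 1 / 2 * ‖u.1‖ ^ 2 - I u)
    (hI : Differentiable ℝ I) (hu : u ∈ NehariPankov J) : fderiv ℝ I u u = ‖u.1‖ ^ 2 := by
  have := hu.2.2 1 0
  rw [one_smul, Prod.mk_zero_zero, add_zero, fderiv_J_apply hJ hI, real_inner_self_eq_norm_sq]
    at this
  linarith

def StrictMax (J : E × F → ℝ) : Prop :=
  ∀ u ∈ NehariPankov J, ∀ s : ℝ, 0 ≤ s → ∀ y : F, (s • u.1, y) ≠ u → J (s • u.1, y) < J u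

theorem strictMax (hJ : ∀ u : E × F, J u = 1 / 2 * ‖u.1‖ ^ 2 - I u)
    (hI : Differentiable ℝ I)
    (hB3 : ∀ u ∈ NehariPankov J, ∀ t : ℝ, 0 ≤ t → ∀ v : F, t • u + ((0 : E), v) ≠ u →
      (t ^ 2 - 1) / 2 * fderiv ℝ I u u + t * fderiv ℝ I u ((0 : E), v)
        + I u - I (t • u + ((0 : E), v)) < 0) :
    StrictMax J := by
  intro u hu s hs y hne
  have hsu : s • u + ((0 : E), y - s • u.2) = (s • u.1, y) := by ext <;> simp
  have h := hB3 u hu s hs (y - s • u.2) (hsu ▸ hne)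
  rw [fderiv_apply_self hJ hI hu, mem_natConstraint hJ hI hu, hsu] at h
  rw [hJ, hJ, norm_smul, Real.norm_eq_abs, mul_pow, sq_abs]
  nlinarith

theorem J_le (hN : StrictMax J) (hu : u ∈ NehariPankov J) {s : ℝ} (hs : 0 ≤ s)
    (y : F) : J (s • u.1, y) ≤ J u := by
  by_cases hne : (s • u.1, y) = u
  · rw [hne]
  · exact (hN u hu s hs y hne).le

theorem eq_of_fst_eq_smul (hN : StrictMax J) {u' : E × F}
    (hu : u ∈ NehariPankov J) (hu' : u' ∈ NehariPankov J) {c : ℝ} (hc : 0 < c)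
    (h : u'.1 = c • u.1) : u' = u := by
  by_contra hne
  have h' : u.1 = c⁻¹ • u'.1 := by rw [h, inv_smul_smul₀ hc.ne']
  have h1 := hN u hu c hc.le u'.2 (by rw [← h]; exact hne)
  have h2 := hN u' hu' c⁻¹ (inv_pos.2 hc).le u.2 (by rw [← h']; exact Ne.symm hne)
  rw [← h] at h1
  rw [← h'] at h2
  exact lt_asymm h1 h2

theorem le_J (hJ : ∀ u : E × F, J u = 1 / 2 * ‖u.1‖ ^ 2 - I u) (hA1 : ∀ u : E × F, 0 ≤ I u)
    (hN : StrictMax J) {r a : ℝ} (hr : 0 ≤ r)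
    (hsphere : ∀ x : E, ‖x‖ = r → a ≤ J (x, 0)) (hu : u ∈ NehariPankov J) : a ≤ J u := by
  have hx := fst_ne_zero hJ hA1 hu
  exact (hsphere _ (norm_smul_inv_norm' (𝕜 := ℝ) hr hx)).trans (J_le hN hu (by positivity) 0)

end NehariPankov

section Rays

variable {E F : Type*} [NormedAddCommGroup E] [InnerProductSpace ℝ E] [NormedAddCommGroup F]
  [NormedSpace ℝ F] {I J : E × F → ℝ}

theorem mem_nehariPankov_of_isLocalMax (hJ : ∀ u : E × F, J u = 1 / 2 * ‖u.1‖ ^ 2 - I u)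
    (hI : Differentiable ℝ I) (hA1 : ∀ u : E × F, 0 ≤ I u) {u : E × F}
    (hu : u ∈ NatConstraint I) (hmax : IsLocalMax (fun s : ℝ => J (s • u)) 1) (hpos : 0 < J u) :
    u ∈ NehariPankov J := by
  have hu0 : u ≠ 0 := by
    rintro rfl
    have := J_le_half_norm_sq hJ hA1 (0 : E × F)
    simp only [Prod.fst_zero, norm_zero] at this
    linarith
  have hd : HasDerivAt (fun s : ℝ => J (s • u)) (fderiv ℝ J u u) 1 := by
    have h := (hasFDerivAt_J hJ hI u).comp_hasDerivAt_of_eq 1 ((hasDerivAt_id 1).smul_const u)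
      (one_smul ℝ u).symm
    rw [one_smul, ← (hasFDerivAt_J hJ hI u).fderiv] at h
    exact h
  have hself : fderiv ℝ J u u = 0 := hmax.hasDerivAt_eq_zero hd
  refine ⟨hu0, hpos, fun s v => ?_⟩
  rw [map_add, map_smul, hself, fderiv_J_apply hJ hI, hu v]
  simp

theorem isLocalMax_smul_fibreMin (hJ : ∀ u : E × F, J u = 1 / 2 * ‖u.1‖ ^ 2 - I u)
    (hmin : HasFibreMinima I) {x : E} {s₀ : ℝ}
    (hmax : IsLocalMax (fun s : ℝ => J (fibreMin I (s • x))) s₀) :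
    IsLocalMax (fun s : ℝ => J (s • fibreMin I (s₀ • x))) 1 := by
  have hc := IsLocalMax.comp_continuous (g := fun s : ℝ => s * s₀) (b := 1)
    (by simpa using hmax) (continuous_id.mul continuous_const).continuousAt
  filter_upwards [hc] with s hs
  simp only [Function.comp_apply, one_mul, one_smul] at hs ⊢
  calc J (s • fibreMin I (s₀ • x)) = J ((s * s₀) • x, s • (fibreMin I (s₀ • x)).2) := by
        congr 1; ext <;> simp [smul_smul]
    _ ≤ J (fibreMin I ((s * s₀) • x)) := J_le_J_fibreMin hJ hmin _ _
    _ ≤ J (fibreMin I (s₀ • x)) := hs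

theorem fibreMin_smul_mem_nehariPankov (hJ : ∀ u : E × F, J u = 1 / 2 * ‖u.1‖ ^ 2 - I u)
    (hI : Differentiable ℝ I) (hA1 : ∀ u : E × F, 0 ≤ I u) (hmin : HasFibreMinima I) {x : E}
    {s₀ : ℝ} (hmax : IsLocalMax (fun s : ℝ => J (fibreMin I (s • x))) s₀)
    (hpos : 0 < J (fibreMin I (s₀ • x))) : fibreMin I (s₀ • x) ∈ NehariPankov J :=
  mem_nehariPankov_of_isLocalMax hJ hI hA1 (fibreMin_mem_natConstraint hI hmin _)
    (isLocalMax_smul_fibreMin hJ hmin hmax) hpos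

theorem tendsto_J_fibreMin_smul_atBot (hJ : ∀ u : E × F, J u = 1 / 2 * ‖u.1‖ ^ 2 - I u)
    (hB2 : ∀ (t : ℕ → ℝ) (u : ℕ → E × F) (u₀ : E), u₀ ≠ 0 → Tendsto t atTop atTop →
      Tendsto (fun n => (u n).1) atTop (𝓝 u₀) →
      Tendsto (fun n => I (t n • u n) / t n ^ 2) atTop atTop)
    {l : E} (hl : l ≠ 0) :
    Tendsto (fun p : E × ℝ => J (fibreMin I (p.2 • p.1))) (𝓝 l ×ˢ atTop) atBot := by
  refine tendsto_iff_seq_tendsto.2 fun p hp => ?_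
  obtain ⟨hx, hs⟩ := tendsto_prod_iff'.1 hp
  set x := fun n => (p n).1
  set s := fun n => (p n).2
  -- rescale the fibre component so that `s n • u n = fibreMin I (s n • x n)`
  set u := fun n => (x n, (s n)⁻¹ • (fibreMin I (s n • x n)).2)
  have hquot : Tendsto (fun n => 1 / 2 * ‖x n‖ ^ 2 - I (s n • u n) / s n ^ 2) atTop atBot := by
    simp only [sub_eq_add_neg]
    exact ((hx.norm.pow 2).const_mul _).add_atBot
      (tendsto_neg_atTop_atBot.comp (hB2 s u l hl hs hx))
  refine (hquot.atBot_mul_atTop₀ ((tendsto_pow_atTop two_ne_zero).comp hs)).congr' ?_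
  filter_upwards [hs.eventually_ne_atTop 0] with n hn
  have hsu : s n • u n = fibreMin I (s n • x n) := by
    ext <;> simp [u, smul_inv_smul₀ hn]
  change _ * s n ^ 2 = J (fibreMin I (s n • x n))
  rw [hJ, fibreMin_fst, ← hsu, norm_smul, Real.norm_eq_abs, mul_pow, sq_abs]
  field_simp

theorem exists_fibreMin_smul_mem_nehariPankov (hJ : ∀ u : E × F, J u = 1 / 2 * ‖u.1‖ ^ 2 - I u)
    (hI : Differentiable ℝ I) (hA1 : ∀ u : E × F, 0 ≤ I u) (hmin : HasFibreMinima I)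
    (hcont : Continuous (fibreMin I))
    (hdecay : ∀ x : E, x ≠ 0 →
      Tendsto (fun p : E × ℝ => J (fibreMin I (p.2 • p.1))) (𝓝 x ×ˢ atTop) atBot)
    {r a : ℝ} (hr : 0 ≤ r) (hapos : 0 < a) (hsphere : ∀ x : E, ‖x‖ = r → a ≤ J (x, 0))
    {x : E} (hx : x ≠ 0) : ∃ s : ℝ, 0 < s ∧ fibreMin I (s • x) ∈ NehariPankov J := by
  have ha : a ≤ J (fibreMin I ((r * ‖x‖⁻¹) • x)) :=
    (hsphere _ (norm_smul_inv_norm' (𝕜 := ℝ) hr hx)).trans (J_le_J_fibreMin hJ hmin _ _)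
  have hs₁ : (0 : ℝ) ≤ r * ‖x‖⁻¹ := by positivity
  obtain ⟨s₀, hs₀, hmax⟩ := exists_pos_isMaxOn_Ici (φ := fun s : ℝ => J (fibreMin I (s • x)))
    ((continuous_J hJ hI.continuous).comp (hcont.comp (by fun_prop)))
    (by simpa using J_fibreMin_zero_nonpos hJ hA1) hs₁ (hapos.trans_le ha)
    ((hdecay x hx).comp (tendsto_const_nhds.prodMk tendsto_id))
  exact ⟨s₀, hs₀, fibreMin_smul_mem_nehariPankov hJ hI hA1 hmin
    (hmax.isLocalMax (Ici_mem_nhds hs₀)) (hapos.trans_le (ha.trans (isMaxOn_iff.1 hmax _ hs₁)))⟩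

-- The junk value `0` (taken when the ray through `x` misses `N`, e.g. for `x = 0`) makes
-- `x ↦ (nehariScale I J x)⁻¹` continuous at `0`.
open Classical in
def nehariScale (I J : E × F → ℝ) (x : E) : ℝ :=
  if hex : ∃ s : ℝ, 0 < s ∧ fibreMin I (s • x) ∈ NehariPankov J then hex.choose else 0

theorem nehariScale_spec {x : E} (hex : ∃ s : ℝ, 0 < s ∧ fibreMin I (s • x) ∈ NehariPankov J) :
    0 < nehariScale I J x ∧ fibreMin I (nehariScale I J x • x) ∈ NehariPankov J := by
  rw [nehariScale, dif_pos hex]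
  exact hex.choose_spec

theorem nehariScale_nonneg (x : E) : 0 ≤ nehariScale I J x := by
  by_cases hex : ∃ s : ℝ, 0 < s ∧ fibreMin I (s • x) ∈ NehariPankov J
  · exact (nehariScale_spec hex).1.le
  · rw [nehariScale, dif_neg hex]

theorem nehariScale_spec_of_ne_zero {x : E} (h : nehariScale I J x ≠ 0) :
    0 < nehariScale I J x ∧ fibreMin I (nehariScale I J x • x) ∈ NehariPankov J := by
  by_cases hex : ∃ s : ℝ, 0 < s ∧ fibreMin I (s • x) ∈ NehariPankov J
  · exact nehariScale_spec hex
  · exact absurd (by rw [nehariScale, dif_neg hex]) h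

theorem nehariScale_zero (hJ : ∀ u : E × F, J u = 1 / 2 * ‖u.1‖ ^ 2 - I u)
    (hA1 : ∀ u : E × F, 0 ≤ I u) : nehariScale I J (0 : E) = 0 := by
  by_contra h
  exact NehariPankov.fst_ne_zero hJ hA1 (nehariScale_spec_of_ne_zero h).2 (by simp)

theorem eq_nehariScale (hJ : ∀ u : E × F, J u = 1 / 2 * ‖u.1‖ ^ 2 - I u)
    (hA1 : ∀ u : E × F, 0 ≤ I u) (hN : NehariPankov.StrictMax J) {x : E} {s : ℝ} (hs : 0 < s)
    (hsx : fibreMin I (s • x) ∈ NehariPankov J) : s = nehariScale I J x := by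
  obtain ⟨hpos, hmem⟩ := nehariScale_spec ⟨s, hs, hsx⟩
  have hx : x ≠ 0 := fun h => NehariPankov.fst_ne_zero hJ hA1 hsx (by simp [h])
  have h := NehariPankov.eq_of_fst_eq_smul hN hmem hsx (div_pos hs hpos)
    (by simp [smul_smul, div_mul_cancel₀ _ hpos.ne'])
  exact smul_left_injective ℝ hx (by simpa using congrArg Prod.fst h)

theorem isMaxOn_J_fibreMin_smul (hN : NehariPankov.StrictMax J) {x : E} {s₀ : ℝ} (hs₀ : 0 < s₀)
    (hmem : fibreMin I (s₀ • x) ∈ NehariPankov J) :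
    IsMaxOn (fun s : ℝ => J (fibreMin I (s • x))) (Set.Ici 0) s₀ := by
  intro s hs
  have h := NehariPankov.J_le hN hmem (div_nonneg hs hs₀.le) (fibreMin I (s • x)).2
  rw [fibreMin_fst, smul_smul, div_mul_cancel₀ _ hs₀.ne'] at h
  exact h

theorem le_J_fibreMin_nehariScale (hJ : ∀ u : E × F, J u = 1 / 2 * ‖u.1‖ ^ 2 - I u)
    (hA1 : ∀ u : E × F, 0 ≤ I u) (hN : NehariPankov.StrictMax J) {r a : ℝ} (hr : 0 ≤ r)
    (hsphere : ∀ x : E, ‖x‖ = r → a ≤ J (x, 0)) {x : E} (h : nehariScale I J x ≠ 0) :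
    a ≤ J (fibreMin I (nehariScale I J x • x)) :=
  NehariPankov.le_J hJ hA1 hN hr hsphere (nehariScale_spec_of_ne_zero h).2

theorem eventually_nehariScale_le (hJ : ∀ u : E × F, J u = 1 / 2 * ‖u.1‖ ^ 2 - I u)
    (hA1 : ∀ u : E × F, 0 ≤ I u)
    (hdecay : ∀ x : E, x ≠ 0 →
      Tendsto (fun p : E × ℝ => J (fibreMin I (p.2 • p.1))) (𝓝 x ×ˢ atTop) atBot)
    (hN : NehariPankov.StrictMax J) {r a : ℝ} (hr : 0 ≤ r)
    (hsphere : ∀ x : E, ‖x‖ = r → a ≤ J (x, 0)) {x : E} (hx : x ≠ 0) :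
    ∃ S : ℝ, ∀ᶠ x' in 𝓝 x, nehariScale I J x' ≤ S := by
  obtain ⟨p, hp, q, hq, hpq⟩ :=
    eventually_prod_iff.1 ((hdecay x hx).eventually (eventually_lt_atBot a))
  obtain ⟨S, hS⟩ := eventually_atTop.1 hq
  refine ⟨max S 0, hp.mono fun x' hx' => ?_⟩
  by_contra! hlt
  have hne : nehariScale I J x' ≠ 0 := ((le_max_right _ _).trans_lt hlt).ne'
  exact (le_J_fibreMin_nehariScale hJ hA1 hN hr hsphere hne).not_gt
    (hpq hx' (hS _ ((le_max_left _ _).trans hlt.le)))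

theorem continuousAt_nehariScale (hJ : ∀ u : E × F, J u = 1 / 2 * ‖u.1‖ ^ 2 - I u)
    (hI : Differentiable ℝ I) (hA1 : ∀ u : E × F, 0 ≤ I u) (hmin : HasFibreMinima I)
    (hcont : Continuous (fibreMin I))
    (hdecay : ∀ x : E, x ≠ 0 →
      Tendsto (fun p : E × ℝ => J (fibreMin I (p.2 • p.1))) (𝓝 x ×ˢ atTop) atBot)
    (hN : NehariPankov.StrictMax J)
    {r a : ℝ} (hr : 0 ≤ r) (hapos : 0 < a) (hsphere : ∀ x : E, ‖x‖ = r → a ≤ J (x, 0))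
    {x : E} (hx : x ≠ 0) : ContinuousAt (nehariScale I J) x := by
  have hspec : ∀ x' : E, x' ≠ 0 →
      0 < nehariScale I J x' ∧ fibreMin I (nehariScale I J x' • x') ∈ NehariPankov J :=
    fun x' hx' => nehariScale_spec
      (exists_fibreMin_smul_mem_nehariPankov hJ hI hA1 hmin hcont hdecay hr hapos hsphere hx')
  obtain ⟨S, hS⟩ := eventually_nehariScale_le hJ hA1 hdecay hN hr hsphere hx
  -- every cluster value `s` of the scales is again the unique maximising scale of `x`
  refine (isCompact_Icc (a := 0) (b := S)).tendsto_nhds_of_unique_mapClusterPt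
    (hS.mono fun x' h => ⟨nehariScale_nonneg x', h⟩) fun s hsS hclus => ?_
  obtain ⟨U, hU, hsU⟩ := mapClusterPt_iff_ultrafilter.1 hclus
  have hφ : Continuous fun p : E × ℝ => J (fibreMin I (p.2 • p.1)) :=
    (continuous_J hJ hI.continuous).comp (hcont.comp (by fun_prop))
  have hlim : ∀ {g : E → ℝ} {t : ℝ}, Tendsto g U (𝓝 t) →
      Tendsto (fun x' => J (fibreMin I (g x' • x'))) U (𝓝 (J (fibreMin I (t • x)))) :=
    fun {_} {t} hg => (hφ.tendsto (x, t)).comp ((tendsto_id.mono_left hU).prodMk_nhds hg)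
  have hneU : ∀ᶠ x' in (U : Filter E), x' ≠ 0 := hU (eventually_ne_nhds hx)
  have ha : a ≤ J (fibreMin I (s • x)) := ge_of_tendsto (hlim hsU) (hneU.mono fun x' hx' =>
    le_J_fibreMin_nehariScale hJ hA1 hN hr hsphere (hspec x' hx').1.ne')
  have hmax : IsMaxOn (fun s' : ℝ => J (fibreMin I (s' • x))) (Set.Ici 0) s := fun s' hs' =>
    le_of_tendsto_of_tendsto (hlim tendsto_const_nhds) (hlim hsU) (hneU.mono fun x' hx' =>
      isMaxOn_J_fibreMin_smul hN (hspec x' hx').1 (hspec x' hx').2 hs')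
  have hs0 : 0 < s := by
    refine lt_of_le_of_ne hsS.1 ?_
    rintro rfl
    have := J_fibreMin_zero_nonpos hJ hA1
    rw [zero_smul] at ha
    linarith
  exact eq_nehariScale hJ hA1 hN hs0 (fibreMin_smul_mem_nehariPankov hJ hI hA1 hmin
    (hmax.isLocalMax (Ici_mem_nhds hs0)) (hapos.trans_le ha))

theorem inv_nehariScale_le (hJ : ∀ u : E × F, J u = 1 / 2 * ‖u.1‖ ^ 2 - I u)
    (hA1 : ∀ u : E × F, 0 ≤ I u) (hN : NehariPankov.StrictMax J) {r a : ℝ} (hr : 0 ≤ r)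
    (hapos : 0 < a) (hsphere : ∀ x : E, ‖x‖ = r → a ≤ J (x, 0)) (x : E) :
    (nehariScale I J x)⁻¹ ≤ ‖x‖ / √(2 * a) := by
  by_cases h : nehariScale I J x = 0
  · rw [h, inv_zero]
    positivity
  have hpos := (nehariScale_spec_of_ne_zero h).1
  have ha := (le_J_fibreMin_nehariScale hJ hA1 hN hr hsphere h).trans (J_le_half_norm_sq hJ hA1 _)
  rw [fibreMin_fst, norm_smul, Real.norm_eq_abs, abs_of_pos hpos] at ha
  have hsqrt : √(2 * a) ≤ nehariScale I J x * ‖x‖ :=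
    Real.sqrt_le_iff.2 ⟨by positivity, by nlinarith⟩
  rw [le_div_iff₀ (Real.sqrt_pos.2 (by positivity)), inv_mul_le_iff₀ hpos]
  exact hsqrt

theorem continuous_inv_nehariScale (hJ : ∀ u : E × F, J u = 1 / 2 * ‖u.1‖ ^ 2 - I u)
    (hI : Differentiable ℝ I) (hA1 : ∀ u : E × F, 0 ≤ I u) (hmin : HasFibreMinima I)
    (hcont : Continuous (fibreMin I))
    (hdecay : ∀ x : E, x ≠ 0 →
      Tendsto (fun p : E × ℝ => J (fibreMin I (p.2 • p.1))) (𝓝 x ×ˢ atTop) atBot)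
    (hN : NehariPankov.StrictMax J)
    {r a : ℝ} (hr : 0 ≤ r) (hapos : 0 < a) (hsphere : ∀ x : E, ‖x‖ = r → a ≤ J (x, 0)) :
    Continuous fun x => (nehariScale I J x)⁻¹ := by
  refine continuous_iff_continuousAt.2 fun x => ?_
  rcases eq_or_ne x 0 with rfl | hx
  · have hbound := inv_nehariScale_le hJ hA1 hN hr hapos hsphere
    rw [ContinuousAt, nehariScale_zero hJ hA1, inv_zero]
    refine squeeze_zero (fun x' => inv_nonneg.2 (nehariScale_nonneg x')) hbound ?_
    simpa using (continuous_norm.div_const (√(2 * a))).tendsto (0 : E)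
  · have hpos := (nehariScale_spec
      (exists_fibreMin_smul_mem_nehariPankov hJ hI hA1 hmin hcont hdecay hr hapos hsphere hx)).1
    exact (continuousAt_nehariScale hJ hI hA1 hmin hcont hdecay hN hr hapos hsphere hx).inv₀
      hpos.ne'

theorem nehariScale_le_one (hJ : ∀ u : E × F, J u = 1 / 2 * ‖u.1‖ ^ 2 - I u)
    (hI : Differentiable ℝ I) (hA1 : ∀ u : E × F, 0 ≤ I u) (hmin : HasFibreMinima I)
    (hcont : Continuous (fibreMin I))
    (hN : NehariPankov.StrictMax J)
    {r a : ℝ} (hr : 0 ≤ r) (hapos : 0 < a) (hsphere : ∀ x : E, ‖x‖ = r → a ≤ J (x, 0))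
    {x : E} (hx : r < ‖x‖) (hneg : J (fibreMin I x) < 0) : nehariScale I J x ≤ 1 := by
  by_contra! hgt
  have hnorm : 0 < ‖x‖ := hr.trans_lt hx
  set φ := fun s : ℝ => J (fibreMin I (s • x))
  have hφ : Continuous φ := (continuous_J hJ hI.continuous).comp (hcont.comp (by fun_prop))
  obtain ⟨s₁, hs₁, hmax⟩ :=
    isCompact_Icc.exists_isMaxOn (Set.nonempty_Icc.2 zero_le_one) hφ.continuousOn
  have hsph : r * ‖x‖⁻¹ ∈ Set.Icc (0 : ℝ) 1 :=
    ⟨by positivity, by rw [← div_eq_mul_inv, div_le_one hnorm]; exact hx.le⟩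
  have ha : a ≤ φ s₁ := ((hsphere _ (norm_smul_inv_norm' (𝕜 := ℝ) hr (norm_pos_iff.1 hnorm))).trans
    (J_le_J_fibreMin hJ hmin _ _)).trans (hmax hsph)
  have hs₁0 : 0 < s₁ := by
    refine lt_of_le_of_ne hs₁.1 ?_
    rintro rfl
    have := J_fibreMin_zero_nonpos hJ hA1
    simp only [φ, zero_smul] at ha
    linarith
  have hs₁1 : s₁ < 1 := by
    refine lt_of_le_of_ne hs₁.2 ?_
    rintro rfl
    simp only [φ, one_smul] at ha
    linarith
  have hloc : IsLocalMax φ s₁ := hmax.isLocalMax (Icc_mem_nhds hs₁0 hs₁1)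
  have := eq_nehariScale hJ hA1 hN hs₁0
    (fibreMin_smul_mem_nehariPankov hJ hI hA1 hmin hloc (hapos.trans_le ha))
  linarith

theorem exists_mem_nehariPankov_of_path (hJ : ∀ u : E × F, J u = 1 / 2 * ‖u.1‖ ^ 2 - I u)
    (hI : Differentiable ℝ I) (hA1 : ∀ u : E × F, 0 ≤ I u) (hmin : HasFibreMinima I)
    (hcont : Continuous (fibreMin I))
    (hdecay : ∀ x : E, x ≠ 0 →
      Tendsto (fun p : E × ℝ => J (fibreMin I (p.2 • p.1))) (𝓝 x ×ˢ atTop) atBot)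
    (hN : NehariPankov.StrictMax J)
    {r a : ℝ} (hr : 0 ≤ r) (hapos : 0 < a) (hsphere : ∀ x : E, ‖x‖ = r → a ≤ J (x, 0))
    (hB4 : ∀ u ∈ NatConstraint I, ∀ v : F, v ≠ 0 → I u < I (u + ((0 : E), v)))
    {γ : ℝ → E × F} (hγc : ContinuousOn γ (Set.Icc 0 1))
    (hγM : ∀ t ∈ Set.Icc (0 : ℝ) 1, γ t ∈ NatConstraint I) (hγ0 : γ 0 = 0)
    (hγr : r < ‖(γ 1).1‖) (hγJ : J (γ 1) < 0) :
    ∃ t ∈ Set.Icc (0 : ℝ) 1, γ t ∈ NehariPankov J := by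
  have hγ : ∀ t ∈ Set.Icc (0 : ℝ) 1, γ t = fibreMin I (γ t).1 := fun t ht =>
    eq_fibreMin_of_mem_natConstraint hmin hB4 (hγM t ht)
  have h1 : (1 : ℝ) ∈ Set.Icc (0 : ℝ) 1 := ⟨zero_le_one, le_rfl⟩
  have hx1 : (γ 1).1 ≠ 0 := norm_pos_iff.1 (hr.trans_lt hγr)
  have hle := nehariScale_le_one hJ hI hA1 hmin hcont hN hr hapos hsphere hγr
    (hγ 1 h1 ▸ hγJ)
  have hpos := (nehariScale_spec
    (exists_fibreMin_smul_mem_nehariPankov hJ hI hA1 hmin hcont hdecay hr hapos hsphere hx1)).1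
  obtain ⟨t, ht, hqt⟩ := intermediate_value_Icc zero_le_one
    ((continuous_inv_nehariScale hJ hI hA1 hmin hcont hdecay hN hr hapos hsphere).comp_continuousOn
      (continuous_fst.comp_continuousOn hγc))
    (show (1 : ℝ) ∈ Set.Icc _ _ from
      ⟨by simp [hγ0, nehariScale_zero hJ hA1], (one_le_inv₀ hpos).2 hle⟩)
  have hs : nehariScale I J (γ t).1 = 1 := inv_eq_one.1 hqt
  have hmem := (nehariScale_spec_of_ne_zero (hs ▸ one_ne_zero)).2
  rw [hs, one_smul, ← hγ t ht] at hmem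
  exact ⟨t, ht, hmem⟩

theorem exists_path_le (hJ : ∀ u : E × F, J u = 1 / 2 * ‖u.1‖ ^ 2 - I u)
    (hI : Differentiable ℝ I) (hA1 : ∀ u : E × F, 0 ≤ I u) (hI0 : I 0 = 0)
    (hmin : HasFibreMinima I) (hcont : Continuous (fibreMin I))
    (hdecay : ∀ x : E, x ≠ 0 →
      Tendsto (fun p : E × ℝ => J (fibreMin I (p.2 • p.1))) (𝓝 x ×ˢ atTop) atBot)
    (hB4 : ∀ u ∈ NatConstraint I, ∀ v : F, v ≠ 0 → I u < I (u + ((0 : E), v)))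
    (hN : NehariPankov.StrictMax J) (r : ℝ) {u : E × F} (hu : u ∈ NehariPankov J) :
    ∃ γ : ℝ → E × F, ContinuousOn γ (Set.Icc 0 1) ∧
      (∀ t ∈ Set.Icc (0 : ℝ) 1, γ t ∈ NatConstraint I) ∧ γ 0 = 0 ∧ r < ‖(γ 1).1‖ ∧
      J (γ 1) < 0 ∧ ∀ t ∈ Set.Icc (0 : ℝ) 1, J (γ t) ≤ J u := by
  have hx := NehariPankov.fst_ne_zero hJ hA1 hu
  have hnorm := norm_pos_iff.2 hx
  obtain ⟨T, hT0, hTr, hTJ⟩ := ((eventually_ge_atTop 0).and ((eventually_gt_atTop (r / ‖u.1‖)).and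
    (((hdecay _ hx).comp (tendsto_const_nhds.prodMk tendsto_id)).eventually_lt_atBot 0))).exists
  refine ⟨fun t => fibreMin I ((t * T) • u.1), (hcont.comp (by fun_prop)).continuousOn,
    fun t _ => fibreMin_mem_natConstraint hI hmin _, ?_, ?_, ?_, fun t ht => ?_⟩
  · simp [fibreMin_zero hI hmin hB4 hA1 hI0]
  · simp only [one_mul, fibreMin_fst]
    rw [norm_smul, Real.norm_eq_abs, abs_of_nonneg hT0]
    exact (div_lt_iff₀ hnorm).1 hTr
  · simpa using hTJ
  · exact NehariPankov.J_le hN hu (mul_nonneg ht.1 hT0) (fibreMin I ((t * T) • u.1)).2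

end Rays

/-- **Theorem 4.6 d).** Under (A1)-(A4), (B1)-(B4), the mountain pass value over the
constraint `M` equals the infimum of `J` over the Nehari–Pankov set: `c_M = c_N`. -/
theorem statement8
    (I J : H × W → ℝ)
    (hWrefl : Function.Surjective (NormedSpace.inclusionInDoubleDual ℝ W))
    (hJ : ∀ u : H × W, J u = 1 / 2 * ‖u.1‖ ^ 2 - I u)
    -- (A1)
    (hIC1 : ContDiff ℝ 1 I) (hA1 : ∀ u : H × W, 0 ≤ I u) (hI0 : I 0 = 0)
    -- (A2)
    (hA2 : ∀ (u : ℕ → H × W) (l : H × W), TConv u l →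
      I l ≤ Filter.liminf (fun n => I (u n)) atTop)
    -- (A3)
    (hA3 : ∀ (u : ℕ → H × W) (l : H × W), TConv u l →
      Tendsto (fun n => I (u n)) atTop (𝓝 (I l)) → Tendsto u atTop (𝓝 l))
    -- (A4)
    (r a : ℝ) (hr : 0 < r)
    (ha : a = sInf {c : ℝ | ∃ h : H, ‖h‖ = r ∧ c = J (h, (0 : W))}) (hapos : 0 < a)
    -- (B1)
    (hB1 : ∀ u : ℕ → H × W, Tendsto (fun n => ‖u n‖) atTop atTop →
      Tendsto (fun n => ‖(u n).1‖ + I (u n)) atTop atTop)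
    -- (B2)
    (hB2 : ∀ (t : ℕ → ℝ) (u : ℕ → H × W) (u₀ : H), u₀ ≠ 0 → Tendsto t atTop atTop →
      Tendsto (fun n => (u n).1) atTop (𝓝 u₀) →
      Tendsto (fun n => I (t n • u n) / t n ^ 2) atTop atTop)
    -- (B3)
    (hB3 : ∀ u ∈ NehariPankov J, ∀ t : ℝ, 0 ≤ t → ∀ v : W, t • u + ((0 : H), v) ≠ u →
      (t ^ 2 - 1) / 2 * fderiv ℝ I u u + t * fderiv ℝ I u ((0 : H), v)
        + I u - I (t • u + ((0 : H), v)) < 0)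
    -- (B4)
    (hB4 : ∀ u ∈ NatConstraint I, ∀ v : W, v ≠ 0 → I u < I (u + ((0 : H), v)))
    -- the mountain pass value over the constraint `M`
    (cM : ℝ)
    (hcM : cM = sInf ((fun γ : ℝ → H × W => sSup (J '' (γ '' Set.Icc (0 : ℝ) 1))) ''
      {γ : ℝ → H × W | ContinuousOn γ (Set.Icc 0 1) ∧
        (∀ t ∈ Set.Icc (0 : ℝ) 1, γ t ∈ NatConstraint I) ∧
        γ 0 = 0 ∧ r < ‖(γ 1).1‖ ∧ J (γ 1) < 0})) :
    cM = sInf (J '' NehariPankov J) := by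
  have hI : Differentiable ℝ I := hIC1.differentiable one_ne_zero
  have hmin := hasFibreMinima hWrefl hA1 hA2 hB1
  have hcont := continuous_fibreMin hWrefl hI hA1 hA2 hA3 hB1 hB4 hmin
  have hN := NehariPankov.strictMax hJ hI hB3
  have hdecay := fun x (hx : x ≠ 0) => tendsto_J_fibreMin_smul_atBot hJ hB2 hx
  have hsphere : ∀ x : H, ‖x‖ = r → a ≤ J (x, 0) :=
    fun x hx => ha ▸ Real.sInf_le_of_sInf_pos (ha ▸ hapos) ⟨x, hx, rfl⟩
  rw [hcM]
  refine csInf_eq_csInf_of_forall_exists_le ?_ ?_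
  · rintro _ ⟨γ, ⟨hγc, hγM, hγ0, hγr, hγJ⟩, rfl⟩
    obtain ⟨t, ht, hmem⟩ := exists_mem_nehariPankov_of_path hJ hI hA1 hmin hcont hdecay hN
      hr.le hapos hsphere hB4 hγc hγM hγ0 hγr hγJ
    have hbdd : BddAbove (J '' (γ '' Set.Icc 0 1)) :=
      ((isCompact_Icc.image_of_continuousOn hγc).image (continuous_J hJ hI.continuous)).bddAbove
    exact ⟨J (γ t), ⟨γ t, hmem, rfl⟩, le_csSup hbdd ⟨γ t, ⟨t, ht, rfl⟩, rfl⟩⟩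
  · rintro _ ⟨u, hu, rfl⟩
    obtain ⟨γ, hγc, hγM, hγ0, hγr, hγJ, hle⟩ :=
      exists_path_le hJ hI hA1 hI0 hmin hcont hdecay hB4 hN r hu
    refine ⟨_, ⟨γ, ⟨hγc, hγM, hγ0, hγr, hγJ⟩, rfl⟩, csSup_le ?_ ?_⟩
    · exact ((Set.nonempty_Icc.2 zero_le_one).image γ).image J
    · rintro _ ⟨_, ⟨t, ht, rfl⟩, rfl⟩
      exact hle t ht
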